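/- arXiv:2102.02245 — 3 statements merged into one kernel-verified Lean document; each statement's English description precedes it below -/
import Mathlib

section
/- Let c(k) denote the dimension of the space of weight-k level-1 complex modular forms (c(k) = 0 for k odd; for k even c(k) = ⌊k/12⌋+1 if k ≢ 2 mod 12, else ⌊k/12⌋), and let t(k) be the number of monomials of weighted degree k in four variables of degrees 4, 6, 10, 12. Then for every even k ≥ 0: t(k) − t(k−10) = c(k)(c(k)+1)/2. -/
open Finset

noncomputable section

/-- The number of solutions of `4a + 6b + 10c + 12d = k` in natural numbers: the
Hilbert function of `F[ψ₄, ψ₆, χ₁₀, χ₁₂]` with generators of degrees `4, 6, 10, 12`. -/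
def tN (k : ℕ) : ℕ :=
  (((range (k + 1) ×ˢ range (k + 1)) ×ˢ (range (k + 1) ×ˢ range (k + 1))).filter
    fun p => 4 * p.1.1 + 6 * p.1.2 + 10 * p.2.1 + 12 * p.2.2 = k).card

/-- The Hilbert function extended by `0` to negative integers. -/
def t (k : ℤ) : ℤ := if k < 0 then 0 else tN k.toNat

/-- The dimension of the space of weight-`k` level-1 complex modular forms. -/
def c (k : ℤ) : ℤ :=
  if k < 0 then 0 else if k % 2 = 1 then 0 else if k % 12 = 2 then k / 12 else k / 12 + 1

/-- Number of solutions of `4a + 6b + 10c = m`. -/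
def s3 (m : ℕ) : ℕ :=
  (((range (m + 1) ×ˢ range (m + 1)) ×ˢ range (m + 1)).filter
    fun p => 4 * p.1.1 + 6 * p.1.2 + 10 * p.2 = m).card

/-- Number of solutions of `4a + 6b = m`. -/
def r2 (m : ℕ) : ℕ :=
  ((range (m + 1) ×ˢ range (m + 1)).filter fun p => 4 * p.1 + 6 * p.2 = m).card

lemma tN_eq_big (k N : ℕ) (h : k ≤ N) :
    tN k = (((range (N + 1) ×ˢ range (N + 1)) ×ˢ (range (N + 1) ×ˢ range (N + 1))).filter
      fun p => 4 * p.1.1 + 6 * p.1.2 + 10 * p.2.1 + 12 * p.2.2 = k).card := by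
  unfold tN
  congr 1
  apply Finset.ext
  rintro ⟨⟨a, b⟩, ⟨cc, d⟩⟩
  simp only [Finset.mem_filter, Finset.mem_product, Finset.mem_range, and_true, true_and]
  omega

lemma s3_eq_big (k N : ℕ) (h : k ≤ N) :
    s3 k = (((range (N + 1) ×ˢ range (N + 1)) ×ˢ range (N + 1)).filter
      fun p => 4 * p.1.1 + 6 * p.1.2 + 10 * p.2 = k).card := by
  unfold s3
  congr 1
  apply Finset.ext
  rintro ⟨⟨a, b⟩, cc⟩
  simp only [Finset.mem_filter, Finset.mem_product, Finset.mem_range, and_true, true_and]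
  omega

lemma r2_eq_big (k N : ℕ) (h : k ≤ N) :
    r2 k = ((range (N + 1) ×ˢ range (N + 1)).filter fun p => 4 * p.1 + 6 * p.2 = k).card := by
  unfold r2
  congr 1
  apply Finset.ext
  rintro ⟨a, b⟩
  simp only [Finset.mem_filter, Finset.mem_product, Finset.mem_range, and_true, true_and]
  omega

lemma tN_step (m : ℕ) : tN (m + 12) = tN m + s3 (m + 12) := by
  classical
  have hsplit := Finset.card_filter_add_card_filter_not
    (s := (((range (m + 13) ×ˢ range (m + 13)) ×ˢ (range (m + 13) ×ˢ range (m + 13))).filter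
      fun p => 4 * p.1.1 + 6 * p.1.2 + 10 * p.2.1 + 12 * p.2.2 = m + 12))
    (p := fun p => p.2.2 = 0)
  have h0 : ((((range (m + 13) ×ˢ range (m + 13)) ×ˢ (range (m + 13) ×ˢ range (m + 13))).filter
      fun p => 4 * p.1.1 + 6 * p.1.2 + 10 * p.2.1 + 12 * p.2.2 = m + 12).filter
      fun p => p.2.2 = 0).card = s3 (m + 12) := by
    rw [s3]
    apply Finset.card_nbij' (fun p => ((p.1.1, p.1.2), p.2.1))
      (fun q => ((q.1.1, q.1.2), (q.2, 0)))
    · rintro ⟨⟨a, b⟩, ⟨cc, d⟩⟩ hp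
      simp only [Finset.mem_coe, Finset.mem_filter, Finset.mem_product, Finset.mem_range, and_true, true_and] at hp ⊢
      omega
    · rintro ⟨⟨a, b⟩, cc⟩ hq
      simp only [Finset.mem_coe, Finset.mem_filter, Finset.mem_product, Finset.mem_range, and_true, true_and] at hq ⊢
      omega
    · rintro ⟨⟨a, b⟩, ⟨cc, d⟩⟩ hp
      simp only [Finset.mem_coe, Finset.mem_filter, Finset.mem_product, Finset.mem_range, and_true, true_and] at hp
      obtain rfl : d = 0 := by omega
      rfl
    · rintro ⟨⟨a, b⟩, cc⟩ hq
      rfl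
  have h1 : ((((range (m + 13) ×ˢ range (m + 13)) ×ˢ (range (m + 13) ×ˢ range (m + 13))).filter
      fun p => 4 * p.1.1 + 6 * p.1.2 + 10 * p.2.1 + 12 * p.2.2 = m + 12).filter
      fun p => ¬ p.2.2 = 0).card = tN m := by
    rw [tN_eq_big m (m + 12) (by omega)]
    apply Finset.card_nbij' (fun p => ((p.1.1, p.1.2), (p.2.1, p.2.2 - 1)))
      (fun q => ((q.1.1, q.1.2), (q.2.1, q.2.2 + 1)))
    · rintro ⟨⟨a, b⟩, ⟨cc, d⟩⟩ hp
      simp only [Finset.mem_coe, Finset.mem_filter, Finset.mem_product, Finset.mem_range, and_true, true_and] at hp ⊢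
      omega
    · rintro ⟨⟨a, b⟩, ⟨cc, d⟩⟩ hq
      simp only [Finset.mem_coe, Finset.mem_filter, Finset.mem_product, Finset.mem_range, and_true, true_and] at hq ⊢
      omega
    · rintro ⟨⟨a, b⟩, ⟨cc, d⟩⟩ hp
      simp only [Finset.mem_coe, Finset.mem_filter, Finset.mem_product, Finset.mem_range, and_true, true_and] at hp
      obtain ⟨d', rfl⟩ : ∃ d', d = d' + 1 := ⟨d - 1, by omega⟩
      rfl
    · rintro ⟨⟨a, b⟩, ⟨cc, d⟩⟩ hq
      rfl
  have htop : tN (m + 12) = (((range (m + 13) ×ˢ range (m + 13)) ×ˢ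
      (range (m + 13) ×ˢ range (m + 13))).filter
      fun p => 4 * p.1.1 + 6 * p.1.2 + 10 * p.2.1 + 12 * p.2.2 = m + 12).card := by
    rw [tN_eq_big (m + 12) (m + 12) le_rfl]
  omega

lemma s3_step (m : ℕ) : s3 (m + 10) = s3 m + r2 (m + 10) := by
  classical
  have hsplit := Finset.card_filter_add_card_filter_not
    (s := (((range (m + 11) ×ˢ range (m + 11)) ×ˢ range (m + 11)).filter
      fun p => 4 * p.1.1 + 6 * p.1.2 + 10 * p.2 = m + 10))
    (p := fun p => p.2 = 0)
  have h0 : ((((range (m + 11) ×ˢ range (m + 11)) ×ˢ range (m + 11)).filter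
      fun p => 4 * p.1.1 + 6 * p.1.2 + 10 * p.2 = m + 10).filter
      fun p => p.2 = 0).card = r2 (m + 10) := by
    rw [r2]
    apply Finset.card_nbij' (fun p => (p.1.1, p.1.2)) (fun q => ((q.1, q.2), 0))
    · rintro ⟨⟨a, b⟩, cc⟩ hp
      simp only [Finset.mem_coe, Finset.mem_filter, Finset.mem_product, Finset.mem_range, and_true, true_and] at hp ⊢
      omega
    · rintro ⟨a, b⟩ hq
      simp only [Finset.mem_coe, Finset.mem_filter, Finset.mem_product, Finset.mem_range, and_true, true_and] at hq ⊢
      omega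
    · rintro ⟨⟨a, b⟩, cc⟩ hp
      simp only [Finset.mem_coe, Finset.mem_filter, Finset.mem_product, Finset.mem_range, and_true, true_and] at hp
      obtain rfl : cc = 0 := by omega
      rfl
    · rintro ⟨a, b⟩ hq
      rfl
  have h1 : ((((range (m + 11) ×ˢ range (m + 11)) ×ˢ range (m + 11)).filter
      fun p => 4 * p.1.1 + 6 * p.1.2 + 10 * p.2 = m + 10).filter
      fun p => ¬ p.2 = 0).card = s3 m := by
    rw [s3_eq_big m (m + 10) (by omega)]
    apply Finset.card_nbij' (fun p => ((p.1.1, p.1.2), p.2 - 1))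
      (fun q => ((q.1.1, q.1.2), q.2 + 1))
    · rintro ⟨⟨a, b⟩, cc⟩ hp
      simp only [Finset.mem_coe, Finset.mem_filter, Finset.mem_product, Finset.mem_range, and_true, true_and] at hp ⊢
      omega
    · rintro ⟨⟨a, b⟩, cc⟩ hq
      simp only [Finset.mem_coe, Finset.mem_filter, Finset.mem_product, Finset.mem_range, and_true, true_and] at hq ⊢
      omega
    · rintro ⟨⟨a, b⟩, cc⟩ hp
      simp only [Finset.mem_coe, Finset.mem_filter, Finset.mem_product, Finset.mem_range, and_true, true_and] at hp
      obtain ⟨c', rfl⟩ : ∃ c', cc = c' + 1 := ⟨cc - 1, by omega⟩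
      rfl
    · rintro ⟨⟨a, b⟩, cc⟩ hq
      rfl
  have htop : s3 (m + 10) = (((range (m + 11) ×ˢ range (m + 11)) ×ˢ range (m + 11)).filter
      fun p => 4 * p.1.1 + 6 * p.1.2 + 10 * p.2 = m + 10).card := by
    rw [s3_eq_big (m + 10) (m + 10) le_rfl]
  omega

lemma r2_step (m : ℕ) (he : m % 2 = 0) : r2 (m + 12) = r2 m + 1 := by
  classical
  have hsplit := Finset.card_filter_add_card_filter_not
    (s := ((range (m + 13) ×ˢ range (m + 13)).filter fun p => 4 * p.1 + 6 * p.2 = m + 12))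
    (p := fun p : ℕ × ℕ => p.2 ≤ 1)
  have h1 : (((range (m + 13) ×ˢ range (m + 13)).filter
      fun p => 4 * p.1 + 6 * p.2 = m + 12).filter fun p => ¬ p.2 ≤ 1).card = r2 m := by
    rw [r2_eq_big m (m + 12) (by omega)]
    apply Finset.card_nbij' (fun p => (p.1, p.2 - 2)) (fun q => (q.1, q.2 + 2))
    · rintro ⟨a, b⟩ hp
      simp only [Finset.mem_coe, Finset.mem_filter, Finset.mem_product, Finset.mem_range, and_true, true_and] at hp ⊢
      omega
    · rintro ⟨a, b⟩ hq
      simp only [Finset.mem_coe, Finset.mem_filter, Finset.mem_product, Finset.mem_range, and_true, true_and] at hq ⊢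
      omega
    · rintro ⟨a, b⟩ hp
      simp only [Finset.mem_coe, Finset.mem_filter, Finset.mem_product, Finset.mem_range, and_true, true_and] at hp
      obtain ⟨b', rfl⟩ : ∃ b', b = b' + 2 := ⟨b - 2, by omega⟩
      rfl
    · rintro ⟨a, b⟩ hq
      rfl
  have h0 : (((range (m + 13) ×ˢ range (m + 13)).filter
      fun p => 4 * p.1 + 6 * p.2 = m + 12).filter fun p => p.2 ≤ 1).card = 1 := by
    obtain ⟨j, hj⟩ : ∃ j, m = 4 * j ∨ m = 4 * j + 2 := ⟨m / 4, by omega⟩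
    rcases hj with hj | hj
    · have : (((range (m + 13) ×ˢ range (m + 13)).filter
          fun p => 4 * p.1 + 6 * p.2 = m + 12).filter fun p => p.2 ≤ 1) = {(j + 3, 0)} := by
        apply Finset.ext
        rintro ⟨a, b⟩
        simp only [Finset.mem_filter, Finset.mem_product, Finset.mem_range,
          Finset.mem_singleton, Prod.mk.injEq]
        omega
      rw [this, Finset.card_singleton]
    · have : (((range (m + 13) ×ˢ range (m + 13)).filter
          fun p => 4 * p.1 + 6 * p.2 = m + 12).filter fun p => p.2 ≤ 1) = {(j + 2, 1)} := by
        apply Finset.ext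
        rintro ⟨a, b⟩
        simp only [Finset.mem_filter, Finset.mem_product, Finset.mem_range,
          Finset.mem_singleton, Prod.mk.injEq]
        omega
      rw [this, Finset.card_singleton]
  have htop : r2 (m + 12) = ((range (m + 13) ×ˢ range (m + 13)).filter
      fun p => 4 * p.1 + 6 * p.2 = m + 12).card := by
    rw [r2_eq_big (m + 12) (m + 12) le_rfl]
  omega

lemma tN_small (k : ℕ) (h : k < 12) : tN k = s3 k := by
  unfold tN s3
  apply Finset.card_nbij' (fun p => ((p.1.1, p.1.2), p.2.1)) (fun q => ((q.1.1, q.1.2), (q.2, 0)))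
  · rintro ⟨⟨a, b⟩, ⟨cc, d⟩⟩ hp
    simp only [Finset.mem_coe, Finset.mem_filter, Finset.mem_product, Finset.mem_range, and_true, true_and] at hp ⊢
    omega
  · rintro ⟨⟨a, b⟩, cc⟩ hq
    simp only [Finset.mem_coe, Finset.mem_filter, Finset.mem_product, Finset.mem_range, and_true, true_and] at hq ⊢
    omega
  · rintro ⟨⟨a, b⟩, ⟨cc, d⟩⟩ hp
    simp only [Finset.mem_coe, Finset.mem_filter, Finset.mem_product, Finset.mem_range, and_true, true_and] at hp
    obtain rfl : d = 0 := by omega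
    rfl
  · rintro ⟨⟨a, b⟩, cc⟩ hq
    rfl

lemma s3_small (k : ℕ) (h : k < 10) : s3 k = r2 k := by
  unfold s3 r2
  apply Finset.card_nbij' (fun p => (p.1.1, p.1.2)) (fun q => ((q.1, q.2), 0))
  · rintro ⟨⟨a, b⟩, cc⟩ hp
    simp only [Finset.mem_coe, Finset.mem_filter, Finset.mem_product, Finset.mem_range, and_true, true_and] at hp ⊢
    omega
  · rintro ⟨a, b⟩ hq
    simp only [Finset.mem_coe, Finset.mem_filter, Finset.mem_product, Finset.mem_range, and_true, true_and] at hq ⊢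
    omega
  · rintro ⟨⟨a, b⟩, cc⟩ hp
    simp only [Finset.mem_coe, Finset.mem_filter, Finset.mem_product, Finset.mem_range, and_true, true_and] at hp
    obtain rfl : cc = 0 := by omega
    rfl
  · rintro ⟨a, b⟩ hq
    rfl

lemma r2_0 : r2 0 = 1 := by decide
lemma r2_2 : r2 2 = 0 := by decide
lemma r2_4 : r2 4 = 1 := by decide
lemma r2_6 : r2 6 = 1 := by decide
lemma r2_8 : r2 8 = 1 := by decide
lemma r2_10 : r2 10 = 1 := by decide
lemma r2_12 : r2 12 = 2 := by decide
lemma r2_14 : r2 14 = 1 := by decide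
lemma r2_16 : r2 16 = 2 := by decide
lemma r2_18 : r2 18 = 2 := by decide
lemma r2_20 : r2 20 = 2 := by decide

lemma s3_0 : s3 0 = 1 := by rw [s3_small 0 (by norm_num), r2_0]
lemma s3_2 : s3 2 = 0 := by rw [s3_small 2 (by norm_num), r2_2]
lemma s3_4 : s3 4 = 1 := by rw [s3_small 4 (by norm_num), r2_4]
lemma s3_6 : s3 6 = 1 := by rw [s3_small 6 (by norm_num), r2_6]
lemma s3_8 : s3 8 = 1 := by rw [s3_small 8 (by norm_num), r2_8]
lemma s3_10 : s3 10 = 2 := by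
  have := s3_step 0
  simp only [Nat.reduceAdd] at this
  rw [s3_0, r2_10] at this
  exact this
lemma s3_12 : s3 12 = 2 := by
  have := s3_step 2
  simp only [Nat.reduceAdd] at this
  rw [s3_2, r2_12] at this
  exact this
lemma s3_14 : s3 14 = 2 := by
  have := s3_step 4
  simp only [Nat.reduceAdd] at this
  rw [s3_4, r2_14] at this
  exact this
lemma s3_16 : s3 16 = 3 := by
  have := s3_step 6
  simp only [Nat.reduceAdd] at this
  rw [s3_6, r2_16] at this
  exact this
lemma s3_18 : s3 18 = 3 := by
  have := s3_step 8
  simp only [Nat.reduceAdd] at this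
  rw [s3_8, r2_18] at this
  exact this
lemma s3_20 : s3 20 = 4 := by
  have := s3_step 10
  simp only [Nat.reduceAdd] at this
  rw [s3_10, r2_20] at this
  exact this

lemma tN_0 : tN 0 = 1 := by rw [tN_small 0 (by norm_num), s3_0]
lemma tN_2 : tN 2 = 0 := by rw [tN_small 2 (by norm_num), s3_2]
lemma tN_4 : tN 4 = 1 := by rw [tN_small 4 (by norm_num), s3_4]
lemma tN_6 : tN 6 = 1 := by rw [tN_small 6 (by norm_num), s3_6]
lemma tN_8 : tN 8 = 1 := by rw [tN_small 8 (by norm_num), s3_8]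
lemma tN_10 : tN 10 = 2 := by rw [tN_small 10 (by norm_num), s3_10]
lemma tN_12 : tN 12 = 3 := by
  have := tN_step 0
  simp only [Nat.reduceAdd] at this
  rw [tN_0, s3_12] at this
  exact this
lemma tN_14 : tN 14 = 2 := by
  have := tN_step 2
  simp only [Nat.reduceAdd] at this
  rw [tN_2, s3_14] at this
  exact this
lemma tN_16 : tN 16 = 4 := by
  have := tN_step 4
  simp only [Nat.reduceAdd] at this
  rw [tN_4, s3_16] at this
  exact this
lemma tN_18 : tN 18 = 4 := by
  have := tN_step 6
  simp only [Nat.reduceAdd] at this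
  rw [tN_6, s3_18] at this
  exact this
lemma tN_20 : tN 20 = 5 := by
  have := tN_step 8
  simp only [Nat.reduceAdd] at this
  rw [tN_8, s3_20] at this
  exact this

lemma c_step (n : ℕ) (he : n % 2 = 0) : c ((n : ℤ) + 12) = c n + 1 := by
  have h0 : (0 : ℤ) ≤ (n : ℤ) := Int.natCast_nonneg n
  have h2 : (n : ℤ) % 2 = 0 := by omega
  simp only [c]
  split_ifs <;> omega

lemma r2_eq_c : ∀ n : ℕ, n % 2 = 0 → (r2 n : ℤ) = c n := by
  intro n
  induction n using Nat.strong_induction_on with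
  | _ n ih =>
    intro he
    by_cases h : n < 12
    · interval_cases n <;> first
        | exact absurd he (by decide)
        | decide
    · obtain ⟨m, rfl⟩ : ∃ m, n = m + 12 := ⟨n - 12, by omega⟩
      rw [r2_step m (by omega)]
      have hm := ih m (by omega) (by omega)
      have e : ((m + 12 : ℕ) : ℤ) = (m : ℤ) + 12 := by push_cast; ring
      rw [e, c_step m (by omega)]
      push_cast
      omega

lemma t_coe (n : ℕ) : t n = tN n := by
  simp [t]

lemma c_nonneg (k : ℤ) : 0 ≤ c k := by
  simp only [c]
  split_ifs <;> omega

lemma toNat_2 : Int.toNat 2 = 2 := rfl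
lemma toNat_4 : Int.toNat 4 = 4 := rfl
lemma toNat_6 : Int.toNat 6 = 6 := rfl
lemma toNat_8 : Int.toNat 8 = 8 := rfl
lemma toNat_10 : Int.toNat 10 = 10 := rfl
lemma toNat_12 : Int.toNat 12 = 12 := rfl
lemma toNat_14 : Int.toNat 14 = 14 := rfl
lemma toNat_16 : Int.toNat 16 = 16 := rfl
lemma toNat_18 : Int.toNat 18 = 18 := rfl
lemma toNat_20 : Int.toNat 20 = 20 := rfl

lemma main_nat : ∀ n : ℕ, n % 2 = 0 → t n - t ((n : ℤ) - 10) = c n * (c n + 1) / 2 := by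
  intro n
  induction n using Nat.strong_induction_on with
  | _ n ih =>
    intro he
    by_cases h : n < 22
    · interval_cases n <;> first
        | exact absurd he (by decide)
        | (norm_num [t, c, toNat_2, toNat_4, toNat_6, toNat_8, toNat_10, toNat_12, toNat_14, toNat_16, toNat_18, toNat_20, tN_0, tN_2, tN_4, tN_6, tN_8, tN_10, tN_12, tN_14, tN_16, tN_18, tN_20])
    · obtain ⟨m, rfl⟩ : ∃ m, n = m + 12 := ⟨n - 12, by omega⟩
      have hm10 : 10 ≤ m := by omega
      obtain ⟨l, rfl⟩ : ∃ l, m = l + 10 := ⟨m - 10, by omega⟩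
      have ihm := ih (l + 10) (by omega) (by omega)
      have e1 : ((l + 10 + 12 : ℕ) : ℤ) = ((l + 22 : ℕ) : ℤ) := by push_cast; ring
      rw [e1]
      have e2 : ((l + 22 : ℕ) : ℤ) - 10 = ((l + 12 : ℕ) : ℤ) := by push_cast; ring
      have e3 : ((l + 10 : ℕ) : ℤ) - 10 = ((l : ℕ) : ℤ) := by push_cast; ring
      rw [e2, t_coe, t_coe]
      rw [e3, t_coe, t_coe] at ihm
      have h1 : tN (l + 22) = tN (l + 10) + s3 (l + 22) := tN_step (l + 10)
      have h2 : tN (l + 12) = tN l + s3 (l + 12) := tN_step l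
      have h3 : s3 (l + 22) = s3 (l + 12) + r2 (l + 22) := s3_step (l + 12)
      have h4 : (r2 (l + 22) : ℤ) = c ((l + 22 : ℕ) : ℤ) := r2_eq_c (l + 22) (by omega)
      have h5 : c ((l + 22 : ℕ) : ℤ) = c ((l + 10 : ℕ) : ℤ) + 1 := by
        have hst := c_step (l + 10) (by omega)
        have e4 : ((l + 22 : ℕ) : ℤ) = ((l + 10 : ℕ) : ℤ) + 12 := by push_cast; ring
        rw [e4]
        exact hst
      set x := c ((l + 10 : ℕ) : ℤ) with hx
      have hnn : 0 ≤ x := c_nonneg _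
      obtain ⟨y, hy⟩ : ∃ y, x * (x + 1) = y + y := by
        rcases Int.even_mul_succ_self x with ⟨y, hyy⟩
        exact ⟨y, by linarith⟩
      rw [h5]
      have hexp2 : (x + 1) * (x + 1 + 1) = y + y + 2 * (x + 1) := by
        rw [show (x + 1) * (x + 1 + 1) = x * (x + 1) + 2 * (x + 1) from by ring, hy]
      rw [hexp2]
      rw [hy] at ihm
      have h4' : (r2 (l + 22) : ℤ) = x + 1 := by rw [h4, h5]
      omega

/-- For every even `k ≥ 0` one has `t(k) − t(k−10) = c(k)(c(k)+1)/2`. -/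
theorem hilbert_difference (k : ℤ) (hk : 0 ≤ k) (he : Even k) :
    t k - t (k - 10) = c k * (c k + 1) / 2 := by
  obtain ⟨n, rfl⟩ : ∃ n : ℕ, k = n := ⟨k.toNat, by omega⟩
  have hn : n % 2 = 0 := by
    rcases he with ⟨r, hr⟩
    omega
  exact main_nat n hn

end
end

section
/- Over a field of characteristic 3, the reduction modulo 3 of the degree-2 invariant A = 120a₀a₆ − 20a₁a₅ + 8a₂a₄ − 3a₃² of binary sextics equals a₁a₅ − a₂a₄ (up to sign: 120 ≡ 0, −20 ≡ 1, 8 ≡ −1, −3 ≡ 0 mod 3), and this polynomial a₁a₅ − a₂a₄ is invariant under the action of SL₂(F) on binary sextics over any field F of characteristic 3. -/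
open MvPolynomial Matrix

noncomputable section

/-- The binary sextic over `F` with coefficient vector `a`. -/
def sextic (F : Type) [Field F] (a : Fin 7 → F) : MvPolynomial (Fin 2) F :=
  ∑ i : Fin 7, C (a i) * X 0 ^ (6 - (i : ℕ)) * X 1 ^ (i : ℕ)

/-- The action of `γ ∈ SL₂(F)` on binary forms by linear substitution of variables. -/
def actγ (F : Type) [Field F] (γ : Matrix.SpecialLinearGroup (Fin 2) F)
    (p : MvPolynomial (Fin 2) F) : MvPolynomial (Fin 2) F :=
  aeval (fun i : Fin 2 => ∑ j : Fin 2, C (γ.1 i j) * X j) p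

set_option maxHeartbeats 4000000

lemma coeff_sextic (F : Type) [Field F] (a : Fin 7 → F) (k : Fin 7) :
    coeff (Finsupp.single 0 (6 - (k : ℕ)) + Finsupp.single 1 (k : ℕ)) (sextic F a) = a k := by
  rw [sextic, coeff_sum]
  rw [Finset.sum_eq_single k]
  · simp [X_pow_eq_monomial, monomial_mul, C_mul_monomial, coeff_monomial]
  · intro j _ hj
    simp only [X_pow_eq_monomial, monomial_mul, C_mul_monomial, coeff_monomial, mul_one]
    rw [if_neg]
    intro h
    have := DFunLike.congr_fun h 1
    simp [Finsupp.single_apply] at this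
    exact hj (Fin.ext (by omega))
  · simp

lemma sextic_inj (F : Type) [Field F] (a b : Fin 7 → F) (h : sextic F a = sextic F b) :
    ∀ i, a i = b i := by
  intro i
  rw [← coeff_sextic F a i, ← coeff_sextic F b i, h]

lemma sextic_expand (F : Type) [Field F] (a : Fin 7 → F) :
    sextic F a = C (a 0) * X 0 ^ 6 + C (a 1) * X 0 ^ 5 * X 1 + C (a 2) * X 0 ^ 4 * X 1 ^ 2
      + C (a 3) * X 0 ^ 3 * X 1 ^ 3 + C (a 4) * X 0 ^ 2 * X 1 ^ 4 + C (a 5) * X 0 * X 1 ^ 5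
      + C (a 6) * X 1 ^ 6 := by
  rw [sextic, Fin.sum_univ_seven]
  norm_num [show ((3:Fin 7):ℕ)=3 from rfl, show ((4:Fin 7):ℕ)=4 from rfl,
    show ((5:Fin 7):ℕ)=5 from rfl, show ((6:Fin 7):ℕ)=6 from rfl]

lemma key (F : Type) [Field F] (p q r s : F) (a b : Fin 7 → F)
    (h0 : b 0 = r ^ 6 * (a 6) + p * r ^ 5 * (a 5) + p ^ 2 * r ^ 4 * (a 4) + p ^ 3 * r ^ 3 * (a 3) + p ^ 4 * r ^ 2 * (a 2) + p ^ 5 * r * (a 1) + p ^ 6 * (a 0))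
    (h1 : b 1 = 6 * r ^ 5 * s * (a 6) + q * r ^ 5 * (a 5) + 5 * p * r ^ 4 * s * (a 5) + 2 * p * q * r ^ 4 * (a 4) + 4 * p ^ 2 * r ^ 3 * s * (a 4) + 3 * p ^ 2 * q * r ^ 3 * (a 3) + 3 * p ^ 3 * r ^ 2 * s * (a 3) + 4 * p ^ 3 * q * r ^ 2 * (a 2) + 2 * p ^ 4 * r * s * (a 2) + 5 * p ^ 4 * q * r * (a 1) + p ^ 5 * s * (a 1) + 6 * p ^ 5 * q * (a 0))
    (h2 : b 2 = 15 * r ^ 4 * s ^ 2 * (a 6) + 5 * q * r ^ 4 * s * (a 5) + q ^ 2 * r ^ 4 * (a 4) + 10 * p * r ^ 3 * s ^ 2 * (a 5) + 8 * p * q * r ^ 3 * s * (a 4) + 3 * p * q ^ 2 * r ^ 3 * (a 3) + 6 * p ^ 2 * r ^ 2 * s ^ 2 * (a 4) + 9 * p ^ 2 * q * r ^ 2 * s * (a 3) + 6 * p ^ 2 * q ^ 2 * r ^ 2 * (a 2) + 3 * p ^ 3 * r * s ^ 2 * (a 3) + 8 * p ^ 3 * q * r * s * (a 2) + 10 * p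 ^ 3 * q ^ 2 * r * (a 1) + p ^ 4 * s ^ 2 * (a 2) + 5 * p ^ 4 * q * s * (a 1) + 15 * p ^ 4 * q ^ 2 * (a 0))
    (h3 : b 3 = 20 * r ^ 3 * s ^ 3 * (a 6) + 10 * q * r ^ 3 * s ^ 2 * (a 5) + 4 * q ^ 2 * r ^ 3 * s * (a 4) + q ^ 3 * r ^ 3 * (a 3) + 10 * p * r ^ 2 * s ^ 3 * (a 5) + 12 * p * q * r ^ 2 * s ^ 2 * (a 4) + 9 * p * q ^ 2 * r ^ 2 * s * (a 3) + 4 * p * q ^ 3 * r ^ 2 * (a 2) + 4 * p ^ 2 * r * s ^ 3 * (a 4) + 9 * p ^ 2 * q * r * s ^ 2 * (a 3) + 12 * p ^ 2 * q ^ 2 * r * s * (a 2) + 10 * p ^ 2 * q ^ 3 * r * (a 1) + p ^ 3 * s ^ 3 * (a 3) + 4 * p ^ 3 * q * s ^ 2 * (a 2) + 10 * p ^ 3 * q ^ 2 * s * (a 1) + 20 * p ^ 3 * q ^ 3 * (a 0))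
    (h4 : b 4 = 15 * r ^ 2 * s ^ 4 * (a 6) + 10 * q * r ^ 2 * s ^ 3 * (a 5) + 6 * q ^ 2 * r ^ 2 * s ^ 2 * (a 4) + 3 * q ^ 3 * r ^ 2 * s * (a 3) + q ^ 4 * r ^ 2 * (a 2) + 5 * p * r * s ^ 4 * (a 5) + 8 * p * q * r * s ^ 3 * (a 4) + 9 * p * q ^ 2 * r * s ^ 2 * (a 3) + 8 * p * q ^ 3 * r * s * (a 2) + 5 * p * q ^ 4 * r * (a 1) + p ^ 2 * s ^ 4 * (a 4) + 3 * p ^ 2 * q * s ^ 3 * (a 3) + 6 * p ^ 2 * q ^ 2 * s ^ 2 * (a 2) + 10 * p ^ 2 * q ^ 3 * s * (a 1) + 15 * p ^ 2 * q ^ 4 * (a 0))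
    (h5 : b 5 = 6 * r * s ^ 5 * (a 6) + 5 * q * r * s ^ 4 * (a 5) + 4 * q ^ 2 * r * s ^ 3 * (a 4) + 3 * q ^ 3 * r * s ^ 2 * (a 3) + 2 * q ^ 4 * r * s * (a 2) + q ^ 5 * r * (a 1) + p * s ^ 5 * (a 5) + 2 * p * q * s ^ 4 * (a 4) + 3 * p * q ^ 2 * s ^ 3 * (a 3) + 4 * p * q ^ 3 * s ^ 2 * (a 2) + 5 * p * q ^ 4 * s * (a 1) + 6 * p * q ^ 5 * (a 0))
    (h6 : b 6 = s ^ 6 * (a 6) + q * s ^ 5 * (a 5) + q ^ 2 * s ^ 4 * (a 4) + q ^ 3 * s ^ 3 * (a 3) + q ^ 4 * s ^ 2 * (a 2) + q ^ 5 * s * (a 1) + q ^ 6 * (a 0)) :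
    aeval (fun i : Fin 2 => ∑ j : Fin 2, C ((!![p, q; r, s] : Matrix (Fin 2) (Fin 2) F) i j) * X j)
      (sextic F a) = sextic F b := by
  rw [sextic_expand, sextic_expand, h0, h1, h2, h3, h4, h5, h6]
  simp only [Fin.sum_univ_two, map_add, _root_.map_mul, map_pow, aeval_X, aeval_C,
    algebraMap_eq, Fin.isValue, Matrix.cons_val_zero, Matrix.cons_val_one, Matrix.head_cons,
    Matrix.of_apply, Matrix.cons_val', Matrix.empty_val',
    Matrix.cons_val_fin_one, Matrix.head_fin_const, map_ofNat, _root_.map_one]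
  ring

/-- In characteristic `3`, the invariant `A = 120 a₀a₆ − 20 a₁a₅ + 8 a₂a₄ − 3 a₃²`
reduces to `a₁a₅ − a₂a₄`, and the latter is an `SL₂(F)`-invariant of binary sextics
over any field `F` of characteristic `3`. -/
theorem invA_mod_three :
    (120 * X 0 * X 6 - 20 * X 1 * X 5 + 8 * X 2 * X 4 - 3 * X 3 ^ 2
        : MvPolynomial (Fin 7) (ZMod 3)) = X 1 * X 5 - X 2 * X 4 ∧
    ∀ (F : Type) [Field F], CharP F 3 →
      ∀ (γ : Matrix.SpecialLinearGroup (Fin 2) F) (a a' : Fin 7 → F),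
        sextic F a' = actγ F γ (sextic F a) →
        a' 1 * a' 5 - a' 2 * a' 4 = a 1 * a 5 - a 2 * a 4 := by
  constructor
  · have h3 : (3 : MvPolynomial (Fin 7) (ZMod 3)) = 0 := by
      have : ((3 : ℕ) : MvPolynomial (Fin 7) (ZMod 3)) = 0 := by
        rw [← C_eq_coe_nat]
        norm_num
        decide
      exact_mod_cast this
    linear_combination (40 * X 0 * X 6 - 7 * X 1 * X 5 + 3 * X 2 * X 4 - X 3 ^ 2 :
      MvPolynomial (Fin 7) (ZMod 3)) * h3
  · intro F _ hchar γ a a' h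
    have h3 : (3 : F) = 0 := by
      have := CharP.cast_eq_zero F 3
      exact_mod_cast this
    set p := γ.1 0 0 with hpd
    set q := γ.1 0 1 with hqd
    set r := γ.1 1 0 with hrd
    set s := γ.1 1 1 with hsd
    have hdet : p * s - q * r = 1 := by
      have h2 := γ.2
      rw [Matrix.det_fin_two] at h2
      exact h2
    have hγ : γ.1 = !![p, q; r, s] := by
      rw [Matrix.eta_fin_two γ.1]
    set b : Fin 7 → F := ![r ^ 6 * (a 6) + p * r ^ 5 * (a 5) + p ^ 2 * r ^ 4 * (a 4) + p ^ 3 * r ^ 3 * (a 3) + p ^ 4 * r ^ 2 * (a 2) + p ^ 5 * r * (a 1) + p ^ 6 * (a 0), 6 * r ^ 5 * s * (a 6) + q * r ^ 5 * (a 5) + 5 * p * r ^ 4 * s * (a 5) + 2 * p * q * r ^ 4 * (a 4) + 4 * p ^ 2 * r ^ 3 * s * (a 4) + 3 * p ^ 2 * q * r ^ 3 * (a 3) + 3 * p ^ 3 * r ^ 2 * s * (a 3) + 4 * p ^ 3 * q * r ^ 2 * (a 2) + 2 * p ^ 4 * r * s * (a 2) + 5 * p ^ 4 * q * r * (a 1)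 + p ^ 5 * s * (a 1) + 6 * p ^ 5 * q * (a 0), 15 * r ^ 4 * s ^ 2 * (a 6) + 5 * q * r ^ 4 * s * (a 5) + q ^ 2 * r ^ 4 * (a 4) + 10 * p * r ^ 3 * s ^ 2 * (a 5) + 8 * p * q * r ^ 3 * s * (a 4) + 3 * p * q ^ 2 * r ^ 3 * (a 3) + 6 * p ^ 2 * r ^ 2 * s ^ 2 * (a 4) + 9 * p ^ 2 * q * r ^ 2 * s * (a 3) + 6 * p ^ 2 * q ^ 2 * r ^ 2 * (a 2) + 3 * p ^ 3 * r * s ^ 2 * (a 3) + 8 * p ^ 3 * q * r * s * (a 2) + 10 * p ^ 3 * q ^ 2 * r * (a 1) + p ^ 4 * s ^ 2 * (a 2) + 5 * p ^ 4 * q * s * (a 1) + 15 * p ^ 4 * q ^ 2 * (a 0), 20 * r ^ 3 * s ^ 3 * (a 6) + 10 * q * r ^ 3 * s ^ 2 * (a 5) + 4 * q ^ 2 * r ^ 3 * s * (a 4) + q ^ 3 * r ^ 3 * (a 3) + 10 * p * r ^ 2 * s ^ 3 * (a 5) + 12 * p * q * r ^ 2 * s ^ 2 * (a 4) + 9 *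 p * q ^ 2 * r ^ 2 * s * (a 3) + 4 * p * q ^ 3 * r ^ 2 * (a 2) + 4 * p ^ 2 * r * s ^ 3 * (a 4) + 9 * p ^ 2 * q * r * s ^ 2 * (a 3) + 12 * p ^ 2 * q ^ 2 * r * s * (a 2) + 10 * p ^ 2 * q ^ 3 * r * (a 1) + p ^ 3 * s ^ 3 * (a 3) + 4 * p ^ 3 * q * s ^ 2 * (a 2) + 10 * p ^ 3 * q ^ 2 * s * (a 1) + 20 * p ^ 3 * q ^ 3 * (a 0), 15 * r ^ 2 * s ^ 4 * (a 6) + 10 * q * r ^ 2 * s ^ 3 * (a 5) + 6 * q ^ 2 * r ^ 2 * s ^ 2 * (a 4) + 3 * q ^ 3 * r ^ 2 * s * (a 3) + q ^ 4 * r ^ 2 * (a 2) + 5 * p * r * s ^ 4 * (a 5) + 8 * p * q * r * s ^ 3 * (a 4) + 9 * p * q ^ 2 * r * s ^ 2 * (a 3) + 8 * p * q ^ 3 * r * s * (a 2) + 5 * p * q ^ 4 * r * (a 1) + p ^ 2 * s ^ 4 * (a 4) + 3 * p ^ 2 * q * s ^ 3 * (a 3) + 6 * p ^ 2 * q ^ 2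 * s ^ 2 * (a 2) + 10 * p ^ 2 * q ^ 3 * s * (a 1) + 15 * p ^ 2 * q ^ 4 * (a 0), 6 * r * s ^ 5 * (a 6) + 5 * q * r * s ^ 4 * (a 5) + 4 * q ^ 2 * r * s ^ 3 * (a 4) + 3 * q ^ 3 * r * s ^ 2 * (a 3) + 2 * q ^ 4 * r * s * (a 2) + q ^ 5 * r * (a 1) + p * s ^ 5 * (a 5) + 2 * p * q * s ^ 4 * (a 4) + 3 * p * q ^ 2 * s ^ 3 * (a 3) + 4 * p * q ^ 3 * s ^ 2 * (a 2) + 5 * p * q ^ 4 * s * (a 1) + 6 * p * q ^ 5 * (a 0), s ^ 6 * (a 6) + q * s ^ 5 * (a 5) + q ^ 2 * s ^ 4 * (a 4) + q ^ 3 * s ^ 3 * (a 3) + q ^ 4 * s ^ 2 * (a 2) + q ^ 5 * s * (a 1) + q ^ 6 * (a 0)] with hbdef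
    have hb : actγ F γ (sextic F a) = sextic F b := by
      rw [actγ, hγ]
      exact key F p q r s a b rfl rfl rfl rfl rfl rfl rfl
    rw [hb] at h
    have e := sextic_inj F a' b h
    have e1 : a' 1 = 6 * r ^ 5 * s * (a 6) + q * r ^ 5 * (a 5) + 5 * p * r ^ 4 * s * (a 5) + 2 * p * q * r ^ 4 * (a 4) + 4 * p ^ 2 * r ^ 3 * s * (a 4) + 3 * p ^ 2 * q * r ^ 3 * (a 3) + 3 * p ^ 3 * r ^ 2 * s * (a 3) + 4 * p ^ 3 * q * r ^ 2 * (a 2) + 2 * p ^ 4 * r * s * (a 2) + 5 * p ^ 4 * q * r * (a 1) + p ^ 5 * s * (a 1) + 6 * p ^ 5 * q * (a 0) := by rw [e 1]; rfl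
    have e2 : a' 2 = 15 * r ^ 4 * s ^ 2 * (a 6) + 5 * q * r ^ 4 * s * (a 5) + q ^ 2 * r ^ 4 * (a 4) + 10 * p * r ^ 3 * s ^ 2 * (a 5) + 8 * p * q * r ^ 3 * s * (a 4) + 3 * p * q ^ 2 * r ^ 3 * (a 3) + 6 * p ^ 2 * r ^ 2 * s ^ 2 * (a 4) + 9 * p ^ 2 * q * r ^ 2 * s * (a 3) + 6 * p ^ 2 * q ^ 2 * r ^ 2 * (a 2) + 3 * p ^ 3 * r * s ^ 2 * (a 3) + 8 * p ^ 3 * q * r * s * (a 2) + 10 * p ^ 3 * q ^ 2 * r * (a 1) + p ^ 4 * s ^ 2 * (a 2) + 5 * p ^ 4 * q * s * (a 1) + 15 * p ^ 4 * q ^ 2 * (a 0) := by rw [e 2]; rfl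
    have e4 : a' 4 = 15 * r ^ 2 * s ^ 4 * (a 6) + 10 * q * r ^ 2 * s ^ 3 * (a 5) + 6 * q ^ 2 * r ^ 2 * s ^ 2 * (a 4) + 3 * q ^ 3 * r ^ 2 * s * (a 3) + q ^ 4 * r ^ 2 * (a 2) + 5 * p * r * s ^ 4 * (a 5) + 8 * p * q * r * s ^ 3 * (a 4) + 9 * p * q ^ 2 * r * s ^ 2 * (a 3) + 8 * p * q ^ 3 * r * s * (a 2) + 5 * p * q ^ 4 * r * (a 1) + p ^ 2 * s ^ 4 * (a 4) + 3 * p ^ 2 * q * s ^ 3 * (a 3) + 6 * p ^ 2 * q ^ 2 * s ^ 2 * (a 2) + 10 * p ^ 2 * q ^ 3 * s * (a 1) + 15 * p ^ 2 * q ^ 4 * (a 0) := by rw [e 4]; rfl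
    have e5 : a' 5 = 6 * r * s ^ 5 * (a 6) + 5 * q * r * s ^ 4 * (a 5) + 4 * q ^ 2 * r * s ^ 3 * (a 4) + 3 * q ^ 3 * r * s ^ 2 * (a 3) + 2 * q ^ 4 * r * s * (a 2) + q ^ 5 * r * (a 1) + p * s ^ 5 * (a 5) + 2 * p * q * s ^ 4 * (a 4) + 3 * p * q ^ 2 * s ^ 3 * (a 3) + 4 * p * q ^ 3 * s ^ 2 * (a 2) + 5 * p * q ^ 4 * s * (a 1) + 6 * p * q ^ 5 * (a 0) := by rw [e 5]; rfl
    rw [e1, e2, e4, e5]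
    linear_combination (-(a 2) * (a 4) + (a 1) * (a 5) - 3 * r * s * (a 3) * (a 4) - 3 * r * s * (a 2) * (a 5) + 6 * r * s * (a 1) * (a 6) - 6 * r ^ 2 * s ^ 2 * (a 4) ^ 2 - 12 * r ^ 2 * s ^ 2 * (a 3) * (a 5) - 3 * r ^ 2 * s ^ 2 * (a 2) * (a 6) - 36 * r ^ 3 * s ^ 3 * (a 4) * (a 5) - 27 * r ^ 3 * s ^ 3 * (a 3) * (a 6) - 45 * r ^ 4 * s ^ 4 * (a 5) ^ 2 - 81 * r ^ 4 * s ^ 4 * (a 4) * (a 6) - 189 * r ^ 5 * s ^ 5 * (a 5) * (a 6) - 9 * q * r * (a 3) ^ 2 - 17 * q * r * (a 2) * (a 4) - 10 * q * r * (a 1) * (a 5) + 36 * q * r * (a 0) * (a 6) - 57 * q * r ^ 2 * s * (a 3) * (a 4) - 48 * q * r ^ 2 * s * (a 2) * (a 5) - 21 * q * r ^ 2 * s * (a 1) * (a 6) - 66 * q * r ^ 3 * s ^ 2 * (a 4) ^ 2 - 123 * q * r ^ 3 * s ^ 2 * (a 3) * (a 5) - 105 * q * r ^ 3 * s ^ 2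 * (a 2) * (a 6) - 225 * q * r ^ 4 * s ^ 3 * (a 4) * (a 5) - 216 * q * r ^ 4 * s ^ 3 * (a 3) * (a 6) - 144 * q * r ^ 5 * s ^ 4 * (a 5) ^ 2 - 297 * q * r ^ 5 * s ^ 4 * (a 4) * (a 6) - 81 * q ^ 2 * r ^ 2 * (a 3) ^ 2 - 154 * q ^ 2 * r ^ 2 * (a 2) * (a 4) - 125 * q ^ 2 * r ^ 2 * (a 1) * (a 5) - 81 * q ^ 2 * r ^ 2 * (a 0) * (a 6) - 294 * q ^ 2 * r ^ 3 * s * (a 3) * (a 4) - 276 * q ^ 2 * r ^ 3 * s * (a 2) * (a 5) - 249 * q ^ 2 * r ^ 3 * s * (a 1) * (a 6) - 195 * q ^ 2 * r ^ 4 * s ^ 2 * (a 4) ^ 2 - 390 * q ^ 2 * r ^ 4 * s ^ 2 * (a 3) * (a 5) - 381 * q ^ 2 * r ^ 4 * s ^ 2 * (a 2) * (a 6) - 342 * q ^ 2 * r ^ 5 * s ^ 3 * (a 4) * (a 5) - 351 * q ^ 2 * r ^ 5 * s ^ 3 * (a 3) * (a 6) - 270 * q ^ 3 * r ^ 3 *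 (a 3) ^ 2 - 530 * q ^ 3 * r ^ 3 * (a 2) * (a 4) - 505 * q ^ 3 * r ^ 3 * (a 1) * (a 5) - 459 * q ^ 3 * r ^ 3 * (a 0) * (a 6) - 570 * q ^ 3 * r ^ 4 * s * (a 3) * (a 4) - 570 * q ^ 3 * r ^ 4 * s * (a 2) * (a 5) - 561 * q ^ 3 * r ^ 4 * s * (a 1) * (a 6) - 183 * q ^ 3 * r ^ 5 * s ^ 2 * (a 4) ^ 2 - 366 * q ^ 3 * r ^ 5 * s ^ 2 * (a 3) * (a 5) - 375 * q ^ 3 * r ^ 5 * s ^ 2 * (a 2) * (a 6) - 378 * q ^ 4 * r ^ 4 * (a 3) ^ 2 - 757 * q ^ 4 * r ^ 4 * (a 2) * (a 4) - 755 * q ^ 4 * r ^ 4 * (a 1) * (a 5) - 756 * q ^ 4 * r ^ 4 * (a 0) * (a 6) - 375 * q ^ 4 * r ^ 5 * s * (a 3) * (a 4) - 375 * q ^ 4 * r ^ 5 * s * (a 2) * (a 5) - 384 * q ^ 4 * r ^ 5 * s * (a 1) * (a 6) - 189 * q ^ 5 * r ^ 5 * (a 3) ^ 2 - 377 * q ^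 5 * r ^ 5 * (a 2) * (a 4) - 379 * q ^ 5 * r ^ 5 * (a 1) * (a 5) - 378 * q ^ 5 * r ^ 5 * (a 0) * (a 6) - p * s * (a 2) * (a 4) + p * s * (a 1) * (a 5) - 3 * p * r * s ^ 2 * (a 3) * (a 4) - 3 * p * r * s ^ 2 * (a 2) * (a 5) + 6 * p * r * s ^ 2 * (a 1) * (a 6) - 6 * p * r ^ 2 * s ^ 3 * (a 4) ^ 2 - 12 * p * r ^ 2 * s ^ 3 * (a 3) * (a 5) - 3 * p * r ^ 2 * s ^ 3 * (a 2) * (a 6) - 36 * p * r ^ 3 * s ^ 4 * (a 4) * (a 5) - 27 * p * r ^ 3 * s ^ 4 * (a 3) * (a 6) - 45 * p * r ^ 4 * s ^ 5 * (a 5) ^ 2 - 81 * p * r ^ 4 * s ^ 5 * (a 4) * (a 6) - 3 * p * q * (a 2) * (a 3) - 3 * p * q * (a 1) * (a 4) + 6 * p * q * (a 0) * (a 5) - 9 * p * q * r * s * (a 3) ^ 2 - 16 * p * q * r * s * (a 2) * (a 4) - 11 * p * q * r * s * (a 1) * (a 5) + 36 * p * q * r * s * (a 0) * (a 6) - 54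 * p * q * r ^ 2 * s ^ 2 * (a 3) * (a 4) - 45 * p * q * r ^ 2 * s ^ 2 * (a 2) * (a 5) - 27 * p * q * r ^ 2 * s ^ 2 * (a 1) * (a 6) - 60 * p * q * r ^ 3 * s ^ 3 * (a 4) ^ 2 - 111 * p * q * r ^ 3 * s ^ 3 * (a 3) * (a 5) - 102 * p * q * r ^ 3 * s ^ 3 * (a 2) * (a 6) - 189 * p * q * r ^ 4 * s ^ 4 * (a 4) * (a 5) - 189 * p * q * r ^ 4 * s ^ 4 * (a 3) * (a 6) - 57 * p * q ^ 2 * r * (a 2) * (a 3) - 48 * p * q ^ 2 * r * (a 1) * (a 4) - 21 * p * q ^ 2 * r * (a 0) * (a 5) - 72 * p * q ^ 2 * r ^ 2 * s * (a 3) ^ 2 - 138 * p * q ^ 2 * r ^ 2 * s * (a 2) * (a 4) - 114 * p * q ^ 2 * r ^ 2 * s * (a 1) * (a 5) - 117 * p * q ^ 2 * r ^ 2 * s * (a 0) * (a 6) - 240 * p * q ^ 2 * r ^ 3 * s ^ 2 * (a 3) * (a 4) - 231 * p * q ^ 2 * r ^ 3 * s ^ 2 * (a 2) * (a 5) - 222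 * p * q ^ 2 * r ^ 3 * s ^ 2 * (a 1) * (a 6) - 135 * p * q ^ 2 * r ^ 4 * s ^ 3 * (a 4) ^ 2 - 279 * p * q ^ 2 * r ^ 4 * s ^ 3 * (a 3) * (a 5) - 279 * p * q ^ 2 * r ^ 4 * s ^ 3 * (a 2) * (a 6) - 294 * p * q ^ 3 * r ^ 2 * (a 2) * (a 3) - 276 * p * q ^ 3 * r ^ 2 * (a 1) * (a 4) - 249 * p * q ^ 3 * r ^ 2 * (a 0) * (a 5) - 198 * p * q ^ 3 * r ^ 3 * s * (a 3) ^ 2 - 392 * p * q ^ 3 * r ^ 3 * s * (a 2) * (a 4) - 391 * p * q ^ 3 * r ^ 3 * s * (a 1) * (a 5) - 342 * p * q ^ 3 * r ^ 3 * s * (a 0) * (a 6) - 330 * p * q ^ 3 * r ^ 4 * s ^ 2 * (a 3) * (a 4) - 339 * p * q ^ 3 * r ^ 4 * s ^ 2 * (a 2) * (a 5) - 339 * p * q ^ 3 * r ^ 4 * s ^ 2 * (a 1) * (a 6) - 570 * p * q ^ 4 * r ^ 3 * (a 2) * (a 3) - 570 * p * q ^ 4 * r ^ 3 * (a 1) *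 (a 4) - 561 * p * q ^ 4 * r ^ 3 * (a 0) * (a 5) - 180 * p * q ^ 4 * r ^ 4 * s * (a 3) ^ 2 - 365 * p * q ^ 4 * r ^ 4 * s * (a 2) * (a 4) - 364 * p * q ^ 4 * r ^ 4 * s * (a 1) * (a 5) - 414 * p * q ^ 4 * r ^ 4 * s * (a 0) * (a 6) - 375 * p * q ^ 5 * r ^ 4 * (a 2) * (a 3) - 375 * p * q ^ 5 * r ^ 4 * (a 1) * (a 4) - 384 * p * q ^ 5 * r ^ 4 * (a 0) * (a 5) - p ^ 2 * s ^ 2 * (a 2) * (a 4) + p ^ 2 * s ^ 2 * (a 1) * (a 5) - 3 * p ^ 2 * r * s ^ 3 * (a 3) * (a 4) - 3 * p ^ 2 * r * s ^ 3 * (a 2) * (a 5) + 6 * p ^ 2 * r * s ^ 3 * (a 1) * (a 6) - 6 * p ^ 2 * r ^ 2 * s ^ 4 * (a 4) ^ 2 - 12 * p ^ 2 * r ^ 2 * s ^ 4 * (a 3) * (a 5) - 3 * p ^ 2 * r ^ 2 * s ^ 4 * (a 2) * (a 6) - 36 * p ^ 2 * r ^ 3 * s ^ 5 * (a 4) * (a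 5) - 27 * p ^ 2 * r ^ 3 * s ^ 5 * (a 3) * (a 6) - 3 * p ^ 2 * q * s * (a 2) * (a 3) - 3 * p ^ 2 * q * s * (a 1) * (a 4) + 6 * p ^ 2 * q * s * (a 0) * (a 5) - 9 * p ^ 2 * q * r * s ^ 2 * (a 3) ^ 2 - 15 * p ^ 2 * q * r * s ^ 2 * (a 2) * (a 4) - 12 * p ^ 2 * q * r * s ^ 2 * (a 1) * (a 5) + 36 * p ^ 2 * q * r * s ^ 2 * (a 0) * (a 6) - 51 * p ^ 2 * q * r ^ 2 * s ^ 3 * (a 3) * (a 4) - 42 * p ^ 2 * q * r ^ 2 * s ^ 3 * (a 2) * (a 5) - 33 * p ^ 2 * q * r ^ 2 * s ^ 3 * (a 1) * (a 6) - 54 * p ^ 2 * q * r ^ 3 * s ^ 4 * (a 4) ^ 2 - 99 * p ^ 2 * q * r ^ 3 * s ^ 4 * (a 3) * (a 5) - 99 * p ^ 2 * q * r ^ 3 * s ^ 4 * (a 2) * (a 6) - 6 * p ^ 2 * q ^ 2 * (a 2) ^ 2 - 12 * p ^ 2 * q ^ 2 * (a 1) * (a 3) - 3 * p ^ 2 *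 q ^ 2 * (a 0) * (a 4) - 54 * p ^ 2 * q ^ 2 * r * s * (a 2) * (a 3) - 45 * p ^ 2 * q ^ 2 * r * s * (a 1) * (a 4) - 27 * p ^ 2 * q ^ 2 * r * s * (a 0) * (a 5) - 63 * p ^ 2 * q ^ 2 * r ^ 2 * s ^ 2 * (a 3) ^ 2 - 123 * p ^ 2 * q ^ 2 * r ^ 2 * s ^ 2 * (a 2) * (a 4) - 102 * p ^ 2 * q ^ 2 * r ^ 2 * s ^ 2 * (a 1) * (a 5) - 153 * p ^ 2 * q ^ 2 * r ^ 2 * s ^ 2 * (a 0) * (a 6) - 189 * p ^ 2 * q ^ 2 * r ^ 3 * s ^ 3 * (a 3) * (a 4) - 189 * p ^ 2 * q ^ 2 * r ^ 3 * s ^ 3 * (a 2) * (a 5) - 189 * p ^ 2 * q ^ 2 * r ^ 3 * s ^ 3 * (a 1) * (a 6) - 66 * p ^ 2 * q ^ 3 * r * (a 2) ^ 2 - 123 * p ^ 2 * q ^ 3 * r * (a 1) * (a 3) - 105 * p ^ 2 * q ^ 3 * r * (a 0) * (a 4) - 240 * p ^ 2 * q ^ 3 * r ^ 2 * s * (a 2)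 * (a 3) - 231 * p ^ 2 * q ^ 3 * r ^ 2 * s * (a 1) * (a 4) - 222 * p ^ 2 * q ^ 3 * r ^ 2 * s * (a 0) * (a 5) - 135 * p ^ 2 * q ^ 3 * r ^ 3 * s ^ 2 * (a 3) ^ 2 - 269 * p ^ 2 * q ^ 3 * r ^ 3 * s ^ 2 * (a 2) * (a 4) - 289 * p ^ 2 * q ^ 3 * r ^ 3 * s ^ 2 * (a 1) * (a 5) - 189 * p ^ 2 * q ^ 3 * r ^ 3 * s ^ 2 * (a 0) * (a 6) - 195 * p ^ 2 * q ^ 4 * r ^ 2 * (a 2) ^ 2 - 390 * p ^ 2 * q ^ 4 * r ^ 2 * (a 1) * (a 3) - 381 * p ^ 2 * q ^ 4 * r ^ 2 * (a 0) * (a 4) - 330 * p ^ 2 * q ^ 4 * r ^ 3 * s * (a 2) * (a 3) - 339 * p ^ 2 * q ^ 4 * r ^ 3 * s * (a 1) * (a 4) - 339 * p ^ 2 * q ^ 4 * r ^ 3 * s * (a 0) * (a 5) - 183 * p ^ 2 * q ^ 5 * r ^ 3 * (a 2) ^ 2 - 366 * p ^ 2 * q ^ 5 * r ^ 3 * (a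 1) * (a 3) - 375 * p ^ 2 * q ^ 5 * r ^ 3 * (a 0) * (a 4) - p ^ 3 * s ^ 3 * (a 2) * (a 4) + p ^ 3 * s ^ 3 * (a 1) * (a 5) - 3 * p ^ 3 * r * s ^ 4 * (a 3) * (a 4) - 3 * p ^ 3 * r * s ^ 4 * (a 2) * (a 5) + 6 * p ^ 3 * r * s ^ 4 * (a 1) * (a 6) - 6 * p ^ 3 * r ^ 2 * s ^ 5 * (a 4) ^ 2 - 12 * p ^ 3 * r ^ 2 * s ^ 5 * (a 3) * (a 5) - 3 * p ^ 3 * r ^ 2 * s ^ 5 * (a 2) * (a 6) - 3 * p ^ 3 * q * s ^ 2 * (a 2) * (a 3) - 3 * p ^ 3 * q * s ^ 2 * (a 1) * (a 4) + 6 * p ^ 3 * q * s ^ 2 * (a 0) * (a 5) - 9 * p ^ 3 * q * r * s ^ 3 * (a 3) ^ 2 - 14 * p ^ 3 * q * r * s ^ 3 * (a 2) * (a 4) - 13 * p ^ 3 * q * r * s ^ 3 * (a 1) * (a 5) + 36 * p ^ 3 * q * r * s ^ 3 * (a 0) * (a 6) - 48 * p ^ 3 * q * r ^ 2 * s ^ 4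 * (a 3) * (a 4) - 39 * p ^ 3 * q * r ^ 2 * s ^ 4 * (a 2) * (a 5) - 39 * p ^ 3 * q * r ^ 2 * s ^ 4 * (a 1) * (a 6) - 6 * p ^ 3 * q ^ 2 * s * (a 2) ^ 2 - 12 * p ^ 3 * q ^ 2 * s * (a 1) * (a 3) - 3 * p ^ 3 * q ^ 2 * s * (a 0) * (a 4) - 51 * p ^ 3 * q ^ 2 * r * s ^ 2 * (a 2) * (a 3) - 42 * p ^ 3 * q ^ 2 * r * s ^ 2 * (a 1) * (a 4) - 33 * p ^ 3 * q ^ 2 * r * s ^ 2 * (a 0) * (a 5) - 54 * p ^ 3 * q ^ 2 * r ^ 2 * s ^ 3 * (a 3) ^ 2 - 109 * p ^ 3 * q ^ 2 * r ^ 2 * s ^ 3 * (a 2) * (a 4) - 89 * p ^ 3 * q ^ 2 * r ^ 2 * s ^ 3 * (a 1) * (a 5) - 189 * p ^ 3 * q ^ 2 * r ^ 2 * s ^ 3 * (a 0) * (a 6) - 36 * p ^ 3 * q ^ 3 * (a 1) * (a 2) - 27 * p ^ 3 * q ^ 3 * (a 0) * (a 3) - 60 * p ^ 3 * q ^ 3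 * r * s * (a 2) ^ 2 - 111 * p ^ 3 * q ^ 3 * r * s * (a 1) * (a 3) - 102 * p ^ 3 * q ^ 3 * r * s * (a 0) * (a 4) - 189 * p ^ 3 * q ^ 3 * r ^ 2 * s ^ 2 * (a 2) * (a 3) - 189 * p ^ 3 * q ^ 3 * r ^ 2 * s ^ 2 * (a 1) * (a 4) - 189 * p ^ 3 * q ^ 3 * r ^ 2 * s ^ 2 * (a 0) * (a 5) - 225 * p ^ 3 * q ^ 4 * r * (a 1) * (a 2) - 216 * p ^ 3 * q ^ 4 * r * (a 0) * (a 3) - 135 * p ^ 3 * q ^ 4 * r ^ 2 * s * (a 2) ^ 2 - 279 * p ^ 3 * q ^ 4 * r ^ 2 * s * (a 1) * (a 3) - 279 * p ^ 3 * q ^ 4 * r ^ 2 * s * (a 0) * (a 4) - 342 * p ^ 3 * q ^ 5 * r ^ 2 * (a 1) * (a 2) - 351 * p ^ 3 * q ^ 5 * r ^ 2 * (a 0) * (a 3) - p ^ 4 * s ^ 4 * (a 2) * (a 4) + p ^ 4 * s ^ 4 * (a 1) * (a 5) - 3 * p ^ 4 * r * s ^ 5 * (a 3) * (a 4) - 3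 * p ^ 4 * r * s ^ 5 * (a 2) * (a 5) + 6 * p ^ 4 * r * s ^ 5 * (a 1) * (a 6) - 3 * p ^ 4 * q * s ^ 3 * (a 2) * (a 3) - 3 * p ^ 4 * q * s ^ 3 * (a 1) * (a 4) + 6 * p ^ 4 * q * s ^ 3 * (a 0) * (a 5) - 9 * p ^ 4 * q * r * s ^ 4 * (a 3) ^ 2 - 13 * p ^ 4 * q * r * s ^ 4 * (a 2) * (a 4) - 14 * p ^ 4 * q * r * s ^ 4 * (a 1) * (a 5) + 36 * p ^ 4 * q * r * s ^ 4 * (a 0) * (a 6) - 6 * p ^ 4 * q ^ 2 * s ^ 2 * (a 2) ^ 2 - 12 * p ^ 4 * q ^ 2 * s ^ 2 * (a 1) * (a 3) - 3 * p ^ 4 * q ^ 2 * s ^ 2 * (a 0) * (a 4) - 48 * p ^ 4 * q ^ 2 * r * s ^ 3 * (a 2) * (a 3) - 39 * p ^ 4 * q ^ 2 * r * s ^ 3 * (a 1) * (a 4) - 39 * p ^ 4 * q ^ 2 * r * s ^ 3 * (a 0) * (a 5) - 36 * p ^ 4 * q ^ 3 * s * (a 1) * (a 2) - 27 * p ^ 4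 * q ^ 3 * s * (a 0) * (a 3) - 54 * p ^ 4 * q ^ 3 * r * s ^ 2 * (a 2) ^ 2 - 99 * p ^ 4 * q ^ 3 * r * s ^ 2 * (a 1) * (a 3) - 99 * p ^ 4 * q ^ 3 * r * s ^ 2 * (a 0) * (a 4) - 45 * p ^ 4 * q ^ 4 * (a 1) ^ 2 - 81 * p ^ 4 * q ^ 4 * (a 0) * (a 2) - 189 * p ^ 4 * q ^ 4 * r * s * (a 1) * (a 2) - 189 * p ^ 4 * q ^ 4 * r * s * (a 0) * (a 3) - 144 * p ^ 4 * q ^ 5 * r * (a 1) ^ 2 - 297 * p ^ 4 * q ^ 5 * r * (a 0) * (a 2) - p ^ 5 * s ^ 5 * (a 2) * (a 4) + p ^ 5 * s ^ 5 * (a 1) * (a 5) - 3 * p ^ 5 * q * s ^ 4 * (a 2) * (a 3) - 3 * p ^ 5 * q * s ^ 4 * (a 1) * (a 4) + 6 * p ^ 5 * q * s ^ 4 * (a 0) * (a 5) - 6 * p ^ 5 * q ^ 2 * s ^ 3 * (a 2) ^ 2 - 12 * p ^ 5 * q ^ 2 * s ^ 3 * (a 1) * (a 3) - 3 * p ^ 5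 * q ^ 2 * s ^ 3 * (a 0) * (a 4) - 36 * p ^ 5 * q ^ 3 * s ^ 2 * (a 1) * (a 2) - 27 * p ^ 5 * q ^ 3 * s ^ 2 * (a 0) * (a 3) - 45 * p ^ 5 * q ^ 4 * s * (a 1) ^ 2 - 81 * p ^ 5 * q ^ 4 * s * (a 0) * (a 2) - 189 * p ^ 5 * q ^ 5 * (a 0) * (a 1)) * hdet + (-r * s * (a 3) * (a 4) - r * s * (a 2) * (a 5) + 2 * r * s * (a 1) * (a 6) - 2 * r ^ 2 * s ^ 2 * (a 4) ^ 2 - 4 * r ^ 2 * s ^ 2 * (a 3) * (a 5) - r ^ 2 * s ^ 2 * (a 2) * (a 6) - 12 * r ^ 3 * s ^ 3 * (a 4) * (a 5) - 9 * r ^ 3 * s ^ 3 * (a 3) * (a 6) - 15 * r ^ 4 * s ^ 4 * (a 5) ^ 2 - 27 * r ^ 4 * s ^ 4 * (a 4) * (a 6) - 63 * r ^ 5 * s ^ 5 * (a 5) * (a 6) - 63 * r ^ 6 * s ^ 6 * (a 6) ^ 2 - 3 * q * r * (a 3) ^ 2 - 6 * q * r * (a 2) * (a 4) - 3 * q * r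 * (a 1) * (a 5) + 12 * q * r * (a 0) * (a 6) - 20 * q * r ^ 2 * s * (a 3) * (a 4) - 17 * q * r ^ 2 * s * (a 2) * (a 5) - 5 * q * r ^ 2 * s * (a 1) * (a 6) - 24 * q * r ^ 3 * s ^ 2 * (a 4) ^ 2 - 45 * q * r ^ 3 * s ^ 2 * (a 3) * (a 5) - 36 * q * r ^ 3 * s ^ 2 * (a 2) * (a 6) - 87 * q * r ^ 4 * s ^ 3 * (a 4) * (a 5) - 81 * q * r ^ 4 * s ^ 3 * (a 3) * (a 6) - 63 * q * r ^ 5 * s ^ 4 * (a 5) ^ 2 - 126 * q * r ^ 5 * s ^ 4 * (a 4) * (a 6) - 126 * q * r ^ 6 * s ^ 5 * (a 5) * (a 6) - 30 * q ^ 2 * r ^ 2 * (a 3) ^ 2 - 57 * q ^ 2 * r ^ 2 * (a 2) * (a 4) - 45 * q ^ 2 * r ^ 2 * (a 1) * (a 5) - 15 * q ^ 2 * r ^ 2 * (a 0) * (a 6) - 117 * q ^ 2 * r ^ 3 * s * (a 3) * (a 4) - 108 * q ^ 2 * r ^ 3 * s * (a 2) * (a 5) - 90 * q ^ 2 * r ^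 3 * s * (a 1) * (a 6) - 87 * q ^ 2 * r ^ 4 * s ^ 2 * (a 4) ^ 2 - 171 * q ^ 2 * r ^ 4 * s ^ 2 * (a 3) * (a 5) - 162 * q ^ 2 * r ^ 4 * s ^ 2 * (a 2) * (a 6) - 189 * q ^ 2 * r ^ 5 * s ^ 3 * (a 4) * (a 5) - 189 * q ^ 2 * r ^ 5 * s ^ 3 * (a 3) * (a 6) - 63 * q ^ 2 * r ^ 6 * s ^ 4 * (a 5) ^ 2 - 126 * q ^ 2 * r ^ 6 * s ^ 4 * (a 4) * (a 6) - 117 * q ^ 3 * r ^ 3 * (a 3) ^ 2 - 228 * q ^ 3 * r ^ 3 * (a 2) * (a 4) - 210 * q ^ 3 * r ^ 3 * (a 1) * (a 5) - 180 * q ^ 3 * r ^ 3 * (a 0) * (a 6) - 288 * q ^ 3 * r ^ 4 * s * (a 3) * (a 4) - 282 * q ^ 3 * r ^ 4 * s * (a 2) * (a 5) - 270 * q ^ 3 * r ^ 4 * s * (a 1) * (a 6) - 126 * q ^ 3 * r ^ 5 * s ^ 2 * (a 4) ^ 2 - 252 * q ^ 3 * r ^ 5 * s ^ 2 * (a 3)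 * (a 5) - 252 * q ^ 3 * r ^ 5 * s ^ 2 * (a 2) * (a 6) - 126 * q ^ 3 * r ^ 6 * s ^ 3 * (a 4) * (a 5) - 126 * q ^ 3 * r ^ 6 * s ^ 3 * (a 3) * (a 6) - 216 * q ^ 4 * r ^ 4 * (a 3) ^ 2 - 429 * q ^ 4 * r ^ 4 * (a 2) * (a 4) - 420 * q ^ 4 * r ^ 4 * (a 1) * (a 5) - 405 * q ^ 4 * r ^ 4 * (a 0) * (a 6) - 315 * q ^ 4 * r ^ 5 * s * (a 3) * (a 4) - 315 * q ^ 4 * r ^ 5 * s * (a 2) * (a 5) - 315 * q ^ 4 * r ^ 5 * s * (a 1) * (a 6) - 63 * q ^ 4 * r ^ 6 * s ^ 2 * (a 4) ^ 2 - 126 * q ^ 4 * r ^ 6 * s ^ 2 * (a 3) * (a 5) - 126 * q ^ 4 * r ^ 6 * s ^ 2 * (a 2) * (a 6) - 189 * q ^ 5 * r ^ 5 * (a 3) ^ 2 - 378 * q ^ 5 * r ^ 5 * (a 2) * (a 4) - 378 * q ^ 5 * r ^ 5 * (a 1) * (a 5) - 378 * q ^ 5 * r ^ 5 * (a 0) *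 (a 6) - 126 * q ^ 5 * r ^ 6 * s * (a 3) * (a 4) - 126 * q ^ 5 * r ^ 6 * s * (a 2) * (a 5) - 126 * q ^ 5 * r ^ 6 * s * (a 1) * (a 6) - 63 * q ^ 6 * r ^ 6 * (a 3) ^ 2 - 126 * q ^ 6 * r ^ 6 * (a 2) * (a 4) - 126 * q ^ 6 * r ^ 6 * (a 1) * (a 5) - 126 * q ^ 6 * r ^ 6 * (a 0) * (a 6) - p * q * (a 2) * (a 3) - p * q * (a 1) * (a 4) + 2 * p * q * (a 0) * (a 5) - 20 * p * q ^ 2 * r * (a 2) * (a 3) - 17 * p * q ^ 2 * r * (a 1) * (a 4) - 5 * p * q ^ 2 * r * (a 0) * (a 5) - 117 * p * q ^ 3 * r ^ 2 * (a 2) * (a 3) - 108 * p * q ^ 3 * r ^ 2 * (a 1) * (a 4) - 90 * p * q ^ 3 * r ^ 2 * (a 0) * (a 5) - 288 * p * q ^ 4 * r ^ 3 * (a 2) * (a 3) - 282 * p * q ^ 4 * r ^ 3 * (a 1) * (a 4) - 270 * p * q ^ 4 * r ^ 3 * (a 0) * (a 5) - 315 * p * q ^ 5 * r ^ 4 * (a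 2) * (a 3) - 315 * p * q ^ 5 * r ^ 4 * (a 1) * (a 4) - 315 * p * q ^ 5 * r ^ 4 * (a 0) * (a 5) - 126 * p * q ^ 6 * r ^ 5 * (a 2) * (a 3) - 126 * p * q ^ 6 * r ^ 5 * (a 1) * (a 4) - 126 * p * q ^ 6 * r ^ 5 * (a 0) * (a 5) - 2 * p ^ 2 * q ^ 2 * (a 2) ^ 2 - 4 * p ^ 2 * q ^ 2 * (a 1) * (a 3) - p ^ 2 * q ^ 2 * (a 0) * (a 4) - 24 * p ^ 2 * q ^ 3 * r * (a 2) ^ 2 - 45 * p ^ 2 * q ^ 3 * r * (a 1) * (a 3) - 36 * p ^ 2 * q ^ 3 * r * (a 0) * (a 4) - 87 * p ^ 2 * q ^ 4 * r ^ 2 * (a 2) ^ 2 - 171 * p ^ 2 * q ^ 4 * r ^ 2 * (a 1) * (a 3) - 162 * p ^ 2 * q ^ 4 * r ^ 2 * (a 0) * (a 4) - 126 * p ^ 2 * q ^ 5 * r ^ 3 * (a 2) ^ 2 - 252 * p ^ 2 * q ^ 5 * r ^ 3 * (a 1) * (a 3) - 252 * p ^ 2 * q ^ 5 * r ^ 3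 * (a 0) * (a 4) - 63 * p ^ 2 * q ^ 6 * r ^ 4 * (a 2) ^ 2 - 126 * p ^ 2 * q ^ 6 * r ^ 4 * (a 1) * (a 3) - 126 * p ^ 2 * q ^ 6 * r ^ 4 * (a 0) * (a 4) - 12 * p ^ 3 * q ^ 3 * (a 1) * (a 2) - 9 * p ^ 3 * q ^ 3 * (a 0) * (a 3) - 87 * p ^ 3 * q ^ 4 * r * (a 1) * (a 2) - 81 * p ^ 3 * q ^ 4 * r * (a 0) * (a 3) - 189 * p ^ 3 * q ^ 5 * r ^ 2 * (a 1) * (a 2) - 189 * p ^ 3 * q ^ 5 * r ^ 2 * (a 0) * (a 3) - 126 * p ^ 3 * q ^ 6 * r ^ 3 * (a 1) * (a 2) - 126 * p ^ 3 * q ^ 6 * r ^ 3 * (a 0) * (a 3) - 15 * p ^ 4 * q ^ 4 * (a 1) ^ 2 - 27 * p ^ 4 * q ^ 4 * (a 0) * (a 2) - 63 * p ^ 4 * q ^ 5 * r * (a 1) ^ 2 - 126 * p ^ 4 * q ^ 5 * r * (a 0) * (a 2) - 63 * p ^ 4 * q ^ 6 * r ^ 2 * (a 1) ^ 2 - 126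 * p ^ 4 * q ^ 6 * r ^ 2 * (a 0) * (a 2) - 63 * p ^ 5 * q ^ 5 * (a 0) * (a 1) - 126 * p ^ 5 * q ^ 6 * r * (a 0) * (a 1) - 63 * p ^ 6 * q ^ 6 * (a 0) ^ 2) * h3

end
end

section
/- The graded ring R = F₂[ψ₁, χ₁₀, ψ₁₂, χ₁₃, χ₄₈]/(χ₁₃⁴ + ψ₁³χ₁₀χ₁₃³ + ψ₁⁴χ₄₈ + χ₁₀⁴ψ₁₂), with generators of degrees 1, 10, 12, 13, 48 and the relation in degree 52, is an integral domain; equivalently, the polynomial χ₁₃⁴ + ψ₁³χ₁₀χ₁₃³ + ψ₁⁴χ₄₈ + χ₁₀⁴ψ₁₂ is irreducible in F₂[ψ₁, χ₁₀, ψ₁₂, χ₁₃, χ₄₈]. -/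
open MvPolynomial

noncomputable section

/-- The relation `χ₁₃⁴ + ψ₁³χ₁₀χ₁₃³ + ψ₁⁴χ₄₈ + χ₁₀⁴ψ₁₂` in
`F₂[ψ₁, χ₁₀, ψ₁₂, χ₁₃, χ₄₈]`, with `X 0 = ψ₁`, `X 1 = χ₁₀`, `X 2 = ψ₁₂`,
`X 3 = χ₁₃`, `X 4 = χ₄₈`. -/
def rel : MvPolynomial (Fin 5) (ZMod 2) :=
  X 3 ^ 4 + X 0 ^ 3 * X 1 * X 3 ^ 3 + X 0 ^ 4 * X 4 + X 1 ^ 4 * X 2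

/-- The ring `R = F₂[ψ₁, χ₁₀, ψ₁₂, χ₁₃, χ₄₈]/(χ₁₃⁴ + ψ₁³χ₁₀χ₁₃³ + ψ₁⁴χ₄₈ + χ₁₀⁴ψ₁₂)`,
the ring of degree-2 Siegel modular forms in characteristic `2`. -/
def R : Type := MvPolynomial (Fin 5) (ZMod 2) ⧸ Ideal.span {rel}

instance : CommRing R := Ideal.Quotient.commRing _

/-- A polynomial of `natDegree` one which is primitive is irreducible. -/
lemma irreducible_of_natDegree_one_of_primitive {A : Type*} [CommRing A] [IsDomain A]
    {p : Polynomial A} (hdeg : p.natDegree = 1) (hprim : p.IsPrimitive) : Irreducible p := by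
  have hp0 : p ≠ 0 := fun h => by simp [h] at hdeg
  constructor
  · intro hu
    have := Polynomial.natDegree_eq_zero_of_isUnit hu
    omega
  · intro q r hqr
    have hq0 : q ≠ 0 := fun h => hp0 (by simp [hqr, h])
    have hr0 : r ≠ 0 := fun h => hp0 (by simp [hqr, h])
    have hsum : q.natDegree + r.natDegree = 1 := by
      rw [← Polynomial.natDegree_mul hq0 hr0, ← hqr, hdeg]
    rcases Nat.eq_zero_or_pos q.natDegree with h | h
    · left
      have hq := Polynomial.eq_C_of_natDegree_eq_zero h
      have hd : Polynomial.C (q.coeff 0) ∣ p := ⟨r, by rw [hqr]; rw [← hq]⟩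
      have := hprim _ hd
      rw [hq]
      exact this.map Polynomial.C
    · right
      have h2 : r.natDegree = 0 := by omega
      have hq := Polynomial.eq_C_of_natDegree_eq_zero h2
      have hd : Polynomial.C (r.coeff 0) ∣ p := ⟨q, by rw [hqr]; rw [← hq]; ring⟩
      have := hprim _ hd
      rw [hq]
      exact this.map Polynomial.C

def a4 : MvPolynomial (Fin 4) (ZMod 2) := X 0 ^ 4
def b4 : MvPolynomial (Fin 4) (ZMod 2) :=
  X 2 ^ 4 + X 1 ^ 3 * X 0 * X 2 ^ 3 + X 1 ^ 4 * X 3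

def p4 : Polynomial (MvPolynomial (Fin 4) (ZMod 2)) :=
  Polynomial.C b4 + Polynomial.C a4 * Polynomial.X

lemma key_eq :
    (MvPolynomial.finSuccEquiv (ZMod 2) 4) ((renameEquiv (ZMod 2) (Equiv.swap (0 : Fin 5) 2)) rel)
      = p4 := by
  have h0 : (Equiv.swap (0 : Fin 5) 2) 0 = 2 := by decide
  have h1 : (Equiv.swap (0 : Fin 5) 2) 1 = 1 := by decide
  have h2 : (Equiv.swap (0 : Fin 5) 2) 2 = 0 := by decide
  have h3 : (Equiv.swap (0 : Fin 5) 2) 3 = 3 := by decide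
  have h4 : (Equiv.swap (0 : Fin 5) 2) 4 = 4 := by decide
  have e1 : (X (1 : Fin 5) : MvPolynomial (Fin 5) (ZMod 2)) = X (Fin.succ 0) := rfl
  have e2 : (X (2 : Fin 5) : MvPolynomial (Fin 5) (ZMod 2)) = X (Fin.succ 1) := rfl
  have e3 : (X (3 : Fin 5) : MvPolynomial (Fin 5) (ZMod 2)) = X (Fin.succ 2) := rfl
  have e4 : (X (4 : Fin 5) : MvPolynomial (Fin 5) (ZMod 2)) = X (Fin.succ 3) := rfl
  simp only [rel, renameEquiv_apply, map_add, map_mul, map_pow, rename_X, h0, h1, h2, h3, h4]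
  simp only [e1, e2, e3, e4, map_add, map_mul, map_pow, finSuccEquiv_X_zero, finSuccEquiv_X_succ]
  simp only [p4, a4, b4, map_add, map_mul, map_pow]

lemma prime_X0 : Prime (X (0 : Fin 4) : MvPolynomial (Fin 4) (ZMod 2)) := by
  rw [← MulEquiv.prime_iff (MvPolynomial.finSuccEquiv (ZMod 2) 3).toMulEquiv]
  have : (MvPolynomial.finSuccEquiv (ZMod 2) 3).toMulEquiv (X 0) = Polynomial.X :=
    finSuccEquiv_X_zero
  rw [this]
  exact Polynomial.prime_X

lemma b4_not_dvd : ¬ (X (0 : Fin 4) : MvPolynomial (Fin 4) (ZMod 2)) ∣ b4 := by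
  intro h
  have := map_dvd (eval (fun i : Fin 4 => if i = 2 then (1 : ZMod 2) else 0)) h
  simp only [b4, eval_add, eval_mul, eval_pow, eval_X] at this
  norm_num at this
  revert this
  decide

lemma p4_coeff_one : p4.coeff 1 = a4 := by
  simp [p4]

lemma p4_coeff_zero : p4.coeff 0 = b4 := by
  simp [p4]

lemma a4_ne_zero : a4 ≠ 0 := pow_ne_zero 4 (X_ne_zero 0)

lemma p4_primitive : p4.IsPrimitive := by
  intro c hc
  rw [Polynomial.C_dvd_iff_dvd_coeff] at hc
  have hca : c ∣ a4 := p4_coeff_one ▸ hc 1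
  have hcb : c ∣ b4 := p4_coeff_zero ▸ hc 0
  by_contra hcu
  have hc0 : c ≠ 0 := by
    rintro rfl
    exact a4_ne_zero (zero_dvd_iff.mp hca)
  obtain ⟨q, hqi, hqc⟩ := WfDvdMonoid.exists_irreducible_factor hcu hc0
  have hq : Prime q := UniqueFactorizationMonoid.irreducible_iff_prime.mp hqi
  have hqa : q ∣ a4 := hqc.trans hca
  simp only [a4] at hqa
  have hqX : q ∣ X (0 : Fin 4) := hq.dvd_of_dvd_pow hqa
  have hXq : Associated q (X (0 : Fin 4)) :=
    hqi.associated_of_dvd prime_X0.irreducible hqX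
  exact b4_not_dvd (hXq.symm.dvd.trans (hqc.trans hcb))

lemma p4_natDegree : p4.natDegree = 1 := by
  rw [p4, add_comm]
  exact Polynomial.natDegree_linear a4_ne_zero

lemma irreducible_rel : Irreducible rel := by
  have h1 := irreducible_of_natDegree_one_of_primitive p4_natDegree p4_primitive
  rw [← key_eq] at h1
  rw [MulEquiv.irreducible_iff (MvPolynomial.finSuccEquiv (ZMod 2) 4)] at h1
  rwa [MulEquiv.irreducible_iff (renameEquiv (ZMod 2) (Equiv.swap (0 : Fin 5) 2))] at h1


/-- `R = F₂[ψ₁, χ₁₀, ψ₁₂, χ₁₃, χ₄₈]/(χ₁₃⁴ + ψ₁³χ₁₀χ₁₃³ + ψ₁⁴χ₄₈ + χ₁₀⁴ψ₁₂)` is an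
integral domain; equivalently the relation polynomial is irreducible. -/
theorem char_two_ring_domain :
    IsDomain R ∧ Irreducible rel := by
  have hirr := irreducible_rel
  refine ⟨?_, hirr⟩
  have hprime : Prime rel := hirr.prime
  have : (Ideal.span {rel}).IsPrime :=
    (Ideal.span_singleton_prime hprime.ne_zero).mpr hprime
  exact Ideal.Quotient.isDomain (Ideal.span {rel})

end
end
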